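/- Let R be a commutative noetherian ring, let 𝔞 be an ideal of R, and let 𝒮 be a Serre subcategory of R-modules. If 𝒮 satisfies the C_𝔭 condition for every prime ideal 𝔭 that is minimal over 𝔞, then 𝒮 satisfies the C_𝔞 condition. -/

import Mathlib

/-!
Some power of `√a` lies in `a` (noetherianity), so `a`-torsion modules are `√a`-torsion, while
`(0 :_M √a) ≤ (0 :_M a)`; hence `C_√a` implies `C_a`. As `√a` is the intersection of the finitely
many primes minimal over `a`, it remains to see that `C_c` and `C_b` give `C_(c ⊓ b)`. For a
`(c ⊓ b)`-torsion `M` with `(0 :_M c ⊓ b)` in `S`, condition `C_c` puts `Γ_c(M)` in `S`; the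
quotient `M/Γ_c(M)` is `b`-torsion, and `(0 :_{M/Γ_c(M)} b)` lies in `S`, being built from
`(0 :_M b)` and a finite power of `Γ_c(M)`. So `C_b` puts `M/Γ_c(M)` in `S`, and then `M` is an
extension of two modules of `S`.
-/

universe u

open Submodule

variable {R : Type u} [CommRing R]

/-- `Γ_a(M)`, the `a`-torsion submodule of `M`: the set of elements annihilated by
some power of the ideal `a`. -/
def torsionGamma (a : Ideal R) (M : Type u) [AddCommGroup M] [Module R M] :
    Submodule R M :=
  ⨆ n : ℕ, Submodule.torsionBySet R M ((a ^ n : Ideal R) : Set R)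

/-- The class `S` satisfies the condition `C_a` on the module `M`:
if `Γ_a(M) = M` and `(0 :_M a) ∈ S` then `M ∈ S`. -/
def CCondOn (S : ModuleCat.{u} R → Prop) (a : Ideal R) (M : ModuleCat.{u} R) : Prop :=
  torsionGamma a M = ⊤ →
    S (ModuleCat.of R (Submodule.torsionBySet R M (a : Set R))) → S M

/-- The class `S` satisfies the condition `C_a` (on every `R`-module). -/
def CCond (S : ModuleCat.{u} R → Prop) (a : Ideal R) : Prop :=
  ∀ M : ModuleCat.{u} R, CCondOn S a M

/-- The class `S` is closed under isomorphisms of `R`-modules. -/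
def IsoClosed (S : ModuleCat.{u} R → Prop) : Prop :=
  ∀ ⦃M N : ModuleCat.{u} R⦄, (M ≃ₗ[R] N) → S M → S N

/-- `S` is a Serre subcategory of the category of `R`-modules: it is closed under
isomorphisms, contains the zero module, and is closed under submodules, quotient modules
and extensions. -/
structure IsSerreClass (S : ModuleCat.{u} R → Prop) : Prop where
  iso : IsoClosed S
  zero : ∀ M : ModuleCat.{u} R, Subsingleton M → S M
  subobj : ∀ (M : ModuleCat.{u} R) (N : Submodule R M), S M → S (ModuleCat.of R N)
  quot : ∀ (M : ModuleCat.{u} R) (N : Submodule R M), S M → S (ModuleCat.of R (M ⧸ N))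
  extension : ∀ (M : ModuleCat.{u} R) (N : Submodule R M),
    S (ModuleCat.of R N) → S (ModuleCat.of R (M ⧸ N)) → S M

section Torsion

variable {M : Type u} [AddCommGroup M] [Module R M]

theorem mem_torsionBySet_ideal_iff {I : Ideal R} {x : M} :
    x ∈ torsionBySet R M (I : Set R) ↔ ∀ r ∈ I, r • x = 0 := by
  simp

theorem mem_torsionGamma_iff {a : Ideal R} {x : M} :
    x ∈ torsionGamma a M ↔ ∃ n : ℕ, ∀ r ∈ a ^ n, r • x = 0 := by
  simp_rw [← mem_torsionBySet_ideal_iff]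
  exact mem_iSup_of_directed _
    (Monotone.directed_le fun i j hij => torsionBySet_le_torsionBySet_pow i j hij a)

theorem torsionGamma_le_torsionGamma_of_pow_le {a b : Ideal R} {k : ℕ} (h : b ^ k ≤ a) :
    torsionGamma a M ≤ torsionGamma b M := fun x hx => by
  obtain ⟨n, hn⟩ := mem_torsionGamma_iff.mp hx
  refine mem_torsionGamma_iff.mpr ⟨k * n, fun r hr => hn r ?_⟩
  rw [pow_mul] at hr
  exact Ideal.pow_right_mono h n hr

theorem torsionGamma_torsionGamma (a : Ideal R) : torsionGamma a (torsionGamma a M) = ⊤ := by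
  refine eq_top_iff.mpr fun x _ => ?_
  obtain ⟨n, hn⟩ := mem_torsionGamma_iff.mp x.2
  exact mem_torsionGamma_iff.mpr ⟨n, fun r hr => Subtype.ext (hn r hr)⟩

/-- If `(c ⊓ b)ⁿ` kills `x`, then `bⁿ x` is killed by `cⁿ`, because `cⁿ bⁿ ≤ (c ⊓ b)ⁿ`. -/
theorem torsionGamma_quotient_torsionGamma_eq_top {b c : Ideal R}
    (hM : torsionGamma (c ⊓ b) M = ⊤) : torsionGamma b (M ⧸ torsionGamma c M) = ⊤ := by
  refine eq_top_iff.mpr fun x _ => ?_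
  obtain ⟨m, rfl⟩ := Submodule.mkQ_surjective _ x
  obtain ⟨n, hn⟩ := mem_torsionGamma_iff.mp (hM ▸ Submodule.mem_top : m ∈ torsionGamma (c ⊓ b) M)
  refine mem_torsionGamma_iff.mpr ⟨n, fun r hr => ?_⟩
  rw [← map_smul, Submodule.mkQ_apply, Submodule.Quotient.mk_eq_zero]
  refine mem_torsionGamma_iff.mpr ⟨n, fun y hy => ?_⟩
  rw [smul_smul]
  refine hn _ (Ideal.pow_right_mono Ideal.mul_le_inf n ?_)
  rw [mul_pow]
  exact Ideal.mul_mem_mul hy hr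

end Torsion

namespace IsSerreClass

variable {S : ModuleCat.{u} R → Prop}
variable {A B M : Type u} [AddCommGroup A] [Module R A] [AddCommGroup B] [Module R B]
  [AddCommGroup M] [Module R M]

theorem of_injective (hS : IsSerreClass S) (f : A →ₗ[R] B) (hf : Function.Injective f)
    (hB : S (ModuleCat.of R B)) : S (ModuleCat.of R A) :=
  hS.iso (LinearEquiv.ofInjective f hf).symm (hS.subobj (ModuleCat.of R B) (LinearMap.range f) hB)

theorem of_surjective (hS : IsSerreClass S) (f : A →ₗ[R] B) (hf : Function.Surjective f)
    (hA : S (ModuleCat.of R A)) : S (ModuleCat.of R B) :=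
  hS.iso (f.quotKerEquivOfSurjective hf) (hS.quot (ModuleCat.of R A) (LinearMap.ker f) hA)

theorem of_le (hS : IsSerreClass S) {N N' : Submodule R A} (h : N' ≤ N)
    (hN : S (ModuleCat.of R N)) : S (ModuleCat.of R N') :=
  hS.of_injective (Submodule.inclusion h) (Submodule.inclusion_injective h) hN

theorem of_ker (hS : IsSerreClass S) (f : A →ₗ[R] B)
    (hker : S (ModuleCat.of R (LinearMap.ker f))) (hB : S (ModuleCat.of R B)) :
    S (ModuleCat.of R A) :=
  hS.extension (ModuleCat.of R A) (LinearMap.ker f) hker <|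
    hS.of_injective ((LinearMap.ker f).liftQ f le_rfl)
      (LinearMap.ker_eq_bot.mp (Submodule.ker_liftQ_eq_bot _ _ _ le_rfl)) hB

theorem prod (hS : IsSerreClass S) (hA : S (ModuleCat.of R A)) (hB : S (ModuleCat.of R B)) :
    S (ModuleCat.of R (A × B)) := by
  refine hS.of_ker (LinearMap.snd R A B) ?_ hB
  rw [LinearMap.ker_snd]
  exact hS.iso (LinearEquiv.ofInjective _ LinearMap.inl_injective) hA

theorem pi_fin (hS : IsSerreClass S) (hA : S (ModuleCat.of R A)) :
    ∀ n : ℕ, S (ModuleCat.of R (Fin n → A))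
  | 0 => hS.zero _ inferInstance
  | n + 1 => hS.iso (Fin.consLinearEquiv R fun _ => A) (hS.prod hA (hS.pi_fin hA n))

/-- The preimage `L` of `(0 :_{M/N} b)` in `M` sits in `0 → (0 :_M b) → L → Nᵏ`, the second map
being `l ↦ (gᵢ l)ᵢ` for generators `g₁, …, gₖ` of `b`. -/
theorem torsionBySet_quotient (hS : IsSerreClass S) {b : Ideal R} (hb : b.FG) (N : Submodule R M)
    (hN : S (ModuleCat.of R N)) (hMb : S (ModuleCat.of R (torsionBySet R M (b : Set R)))) :
    S (ModuleCat.of R (torsionBySet R (M ⧸ N) (b : Set R))) := by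
  obtain ⟨k, g, hg⟩ := Submodule.fg_iff_exists_fin_generating_family.mp hb
  have mem_torsion_iff (x : M) : x ∈ torsionBySet R M (b : Set R) ↔ ∀ i, g i • x = 0 := by
    rw [← hg, ← Ideal.span, ← torsionBySet_eq_torsionBySet_span]
    simp
  set L := (torsionBySet R (M ⧸ N) (b : Set R)).comap N.mkQ
  have hgL (i : Fin k) (l : L) : g i • (l : M) ∈ N := by
    have hi : g i ∈ b := hg ▸ Submodule.subset_span ⟨i, rfl⟩
    simpa [← Submodule.Quotient.mk_eq_zero] using
      mem_torsionBySet_ideal_iff.mp (Submodule.mem_comap.mp l.2) (g i) hi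
  let φ : L →ₗ[R] Fin k → N := LinearMap.pi fun i => (g i • L.subtype).codRestrict N (hgL i)
  have hker (l : LinearMap.ker φ) : ((l : L) : M) ∈ torsionBySet R M (b : Set R) :=
    (mem_torsion_iff _).mpr fun i => congrArg Subtype.val (congrFun l.2 i)
  have hL : S (ModuleCat.of R L) := by
    refine hS.of_ker φ (hS.of_injective ((L.subtype ∘ₗ (LinearMap.ker φ).subtype).codRestrict _
      hker) ?_ hMb) (hS.pi_fin hN k)
    exact (LinearMap.injective_codRestrict_iff hker).mpr
      (L.injective_subtype.comp (LinearMap.ker φ).injective_subtype)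
  exact hS.of_surjective _ (N.mkQ.submoduleComap_surjective_of_surjective _ N.mkQ_surjective) hL

end IsSerreClass

theorem cCond_top {S : ModuleCat.{u} R → Prop} (hS : IsSerreClass S) : CCond S (⊤ : Ideal R) := by
  intro M hM _
  have hzero (x : M) : x = 0 := by
    obtain ⟨n, hn⟩ := mem_torsionGamma_iff.mp (hM ▸ Submodule.mem_top : x ∈ torsionGamma ⊤ M)
    simpa using hn 1 (by rw [Ideal.top_pow]; trivial)
  exact hS.zero M ⟨fun x y => (hzero x).trans (hzero y).symm⟩

namespace CCond

variable {S : ModuleCat.{u} R → Prop}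

theorem of_radical (hS : IsSerreClass S) {a : Ideal R} (ha : a.radical.FG)
    (h : CCond S a.radical) : CCond S a := by
  intro M hM hH
  obtain ⟨k, hk⟩ := a.exists_radical_pow_le_of_fg ha
  refine h M (eq_top_iff.mpr (hM ▸ torsionGamma_le_torsionGamma_of_pow_le hk)) ?_
  exact hS.of_le (torsionBySet_le_torsionBySet_of_subset a.le_radical) hH

theorem torsionGamma_mem (hS : IsSerreClass S) {c : Ideal R} (hc : CCond S c)
    {M : Type u} [AddCommGroup M] [Module R M]
    (hM : S (ModuleCat.of R (torsionBySet R M (c : Set R)))) :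
    S (ModuleCat.of R (torsionGamma c M)) := by
  set Γ := torsionGamma c M
  have hval (x : torsionBySet R Γ (c : Set R)) : ((x : Γ) : M) ∈ torsionBySet R M (c : Set R) :=
    mem_torsionBySet_ideal_iff.mpr fun r hr =>
      congrArg Subtype.val (mem_torsionBySet_ideal_iff.mp x.2 r hr)
  refine hc _ (torsionGamma_torsionGamma c) (hS.of_injective ((Γ.subtype ∘ₗ
    (torsionBySet R Γ (c : Set R)).subtype).codRestrict _ hval) ?_ hM)
  exact (LinearMap.injective_codRestrict_iff hval).mpr
    (Γ.injective_subtype.comp (torsionBySet R Γ (c : Set R)).injective_subtype)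

theorem inf (hS : IsSerreClass S) {c b : Ideal R} (hb : b.FG) (hcC : CCond S c)
    (hbC : CCond S b) : CCond S (c ⊓ b) := by
  intro M hM hH
  have hΓ : S (ModuleCat.of R (torsionGamma c M)) :=
    hcC.torsionGamma_mem hS (hS.of_le (torsionBySet_le_torsionBySet_of_subset inf_le_left) hH)
  have hMb : S (ModuleCat.of R (torsionBySet R M (b : Set R))) :=
    hS.of_le (torsionBySet_le_torsionBySet_of_subset inf_le_right) hH
  exact hS.extension M _ hΓ (hbC _ (torsionGamma_quotient_torsionGamma_eq_top hM)
    (hS.torsionBySet_quotient hb _ hΓ hMb))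

theorem sInf [IsNoetherianRing R] (hS : IsSerreClass S) {s : Set (Ideal R)} (hs : s.Finite)
    (h : ∀ p ∈ s, CCond S p) : CCond S (sInf s) := by
  induction s, hs using Set.Finite.induction_on with
  | empty => simpa using cCond_top hS
  | @insert p s _ _ ih =>
    rw [sInf_insert]
    exact (h p (Set.mem_insert p s)).inf hS (IsNoetherian.noetherian _)
      (ih fun q hq => h q (Set.mem_insert_of_mem p hq))

end CCond

/-- If a Serre subcategory `S` satisfies `C_p` for every prime `p` minimal over `a`,
then `S` satisfies `C_a`. -/
theorem stmt8 [IsNoetherianRing R] (a : Ideal R)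
    (S : ModuleCat.{u} R → Prop)
    (hS : IsSerreClass S)
    (h : ∀ p ∈ a.minimalPrimes, CCond S p) :
    CCond S a := by
  apply CCond.of_radical hS (IsNoetherian.noetherian _)
  rw [← Ideal.sInf_minimalPrimes]
  exact CCond.sInf hS (a.finite_minimalPrimes_of_isNoetherianRing R) h
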